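/- arXiv:1706.05641 — 3 statements merged into one kernel-verified Lean document; each statement's English description precedes it below -/
import Mathlib

section
/- Let R, M be real numbers with M ≥ R ≥ 0, and let s₁, s₂ be real numbers with 0 ≤ s₁ ≤ s₂ ≤ R. Set rᵢ = R − sᵢ for i = 1, 2. Then (r₁ + √(r₁² + 4·s₁·M))/2 ≤ (r₂ + √(r₂² + 4·s₂·M))/2. -/
theorem stmt_8 (R M s₁ s₂ : ℝ) (hR : 0 ≤ R) (hM : R ≤ M)
    (hs₁ : 0 ≤ s₁) (hs : s₁ ≤ s₂) (hs₂ : s₂ ≤ R) :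
    ((R - s₁) + Real.sqrt ((R - s₁) ^ 2 + 4 * s₁ * M)) / 2 ≤
      ((R - s₂) + Real.sqrt ((R - s₂) ^ 2 + 4 * s₂ * M)) / 2 := by
  have hM0 : 0 ≤ M := hR.trans hM
  set a := Real.sqrt ((R - s₁) ^ 2 + 4 * s₁ * M) with ha
  have h1nn : 0 ≤ (R - s₁) ^ 2 + 4 * s₁ * M := by positivity
  have ha0 : 0 ≤ a := Real.sqrt_nonneg _
  have ha2 : a ^ 2 = (R - s₁) ^ 2 + 4 * s₁ * M := Real.sq_sqrt h1nn
  have hub : a ≤ 2 * M - R + s₁ := by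
    have h : a ≤ Real.sqrt ((2 * M - R + s₁) ^ 2) := by
      apply Real.sqrt_le_sqrt
      nlinarith
    rwa [Real.sqrt_sq (by linarith)] at h
  have key : a + (s₂ - s₁) ≤ Real.sqrt ((R - s₂) ^ 2 + 4 * s₂ * M) := by
    rw [show (R - s₂) ^ 2 + 4 * s₂ * M = (a + (s₂ - s₁)) ^ 2 +
        2 * (s₂ - s₁) * ((2 * M - R + s₁) - a) from by nlinarith]
    have : 0 ≤ 2 * (s₂ - s₁) * ((2 * M - R + s₁) - a) := by
      apply mul_nonneg (by linarith) (by linarith)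
    calc a + (s₂ - s₁) = Real.sqrt ((a + (s₂ - s₁)) ^ 2) :=
          (Real.sqrt_sq (by linarith)).symm
      _ ≤ _ := Real.sqrt_le_sqrt (by linarith)
  linarith
end

section
/- Let A be a real n×n matrix (n ≥ 2), λ ∈ ℂ, and u, v ∈ ℂⁿ both nonzero, such that A·v = λ·u and Aᵀ·u = λ·v. Then |λ| ≤ max over i of max(R_i(A), C_i(A)), where R_i(A) = Σ_k |a_{ik}| and C_i(A) = Σ_k |a_{ki}| are the i-th absolute row and column sums of A. -/
/-!
Choose an index `i` maximising `max ‖u i‖ ‖v i‖`. If `‖u i‖` attains the maximum, the `i`-th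
row of `A v = λ u` gives `‖λ‖ ‖u i‖ ≤ R_i(A) ‖u i‖`, since every `‖v k‖` is at most `‖u i‖`;
otherwise the `i`-th row of `Aᵀ u = λ v` gives `‖λ‖ ‖v i‖ ≤ C_i(A) ‖v i‖`. The maximum is
positive because `u ≠ 0`, so it can be cancelled.
-/

open Matrix

variable {m n R : Type*} [Fintype n]

theorem Matrix.norm_mulVec_apply_le [SeminormedRing R] (A : Matrix m n R) (v : n → R) (i : m)
    {M : ℝ} (hv : ∀ k, ‖v k‖ ≤ M) : ‖(A *ᵥ v) i‖ ≤ (∑ k, ‖A i k‖) * M := calc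
  ‖(A *ᵥ v) i‖ = ‖∑ k, A i k * v k‖ := rfl
  _ ≤ ∑ k, ‖A i k‖ * ‖v k‖ := norm_sum_le_of_le _ fun _ _ => norm_mul_le _ _
  _ ≤ ∑ k, ‖A i k‖ * M :=
    Finset.sum_le_sum fun k _ => mul_le_mul_of_nonneg_left (hv k) (norm_nonneg _)
  _ = (∑ k, ‖A i k‖) * M := (Finset.sum_mul ..).symm

theorem Matrix.norm_le_sum_norm_of_mulVec_eq_smul [NormedDivisionRing R] (A : Matrix m n R)
    {lam : R} {u : m → R} {v : n → R} (h : A *ᵥ v = lam • u) {i : m} (hui : 0 < ‖u i‖)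
    (hv : ∀ k, ‖v k‖ ≤ ‖u i‖) : ‖lam‖ ≤ ∑ k, ‖A i k‖ := by
  refine le_of_mul_le_mul_right ?_ hui
  calc ‖lam‖ * ‖u i‖ = ‖(A *ᵥ v) i‖ := by rw [h, Pi.smul_apply, smul_eq_mul, norm_mul]
    _ ≤ (∑ k, ‖A i k‖) * ‖u i‖ := A.norm_mulVec_apply_le v i hv

theorem Matrix.exists_norm_le_max_sum_norm_of_mulVec_eq_smul [NormedDivisionRing R]
    (A : Matrix n n R) {lam : R} {u v : n → R} (hu : u ≠ 0)
    (h₁ : A *ᵥ v = lam • u) (h₂ : Aᵀ *ᵥ u = lam • v) :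
    ∃ i, ‖lam‖ ≤ max (∑ k, ‖A i k‖) (∑ k, ‖A k i‖) := by
  obtain ⟨j, huj⟩ := Function.ne_iff.mp hu
  have : Nonempty n := ⟨j⟩
  obtain ⟨i, hi⟩ := Finite.exists_max fun k => max ‖u k‖ ‖v k‖
  have hpos : 0 < max ‖u i‖ ‖v i‖ :=
    (norm_pos_iff.mpr huj).trans_le ((le_max_left _ _).trans (hi j))
  refine ⟨i, ?_⟩
  rcases le_total ‖v i‖ ‖u i‖ with hvu | huv
  · rw [max_eq_left hvu] at hi hpos
    exact (A.norm_le_sum_norm_of_mulVec_eq_smul h₁ hpos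
      fun k => (le_max_right _ _).trans (hi k)).trans (le_max_left _ _)
  · rw [max_eq_right huv] at hi hpos
    exact (Aᵀ.norm_le_sum_norm_of_mulVec_eq_smul h₂ hpos
      fun k => (le_max_left _ _).trans (hi k)).trans (le_max_right _ _)

theorem stmt_11_general {n : ℕ} (A : Matrix (Fin n) (Fin n) ℝ)
    (lam : ℂ) (u v : Fin n → ℂ) (hu : u ≠ 0)
    (h1 : (A.map (Complex.ofReal)).mulVec v = lam • u)
    (h2 : (A.map (Complex.ofReal)).transpose.mulVec u = lam • v) :
    ∃ i : Fin n, ‖lam‖ ≤ max (∑ k, |A i k|) (∑ k, |A k i|) := by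
  simpa only [map_apply, Complex.norm_real, Real.norm_eq_abs] using
    (A.map Complex.ofReal).exists_norm_le_max_sum_norm_of_mulVec_eq_smul hu h1 h2

theorem stmt_11 {n : ℕ} (hn : 2 ≤ n) (A : Matrix (Fin n) (Fin n) ℝ)
    (lam : ℂ) (u v : Fin n → ℂ) (hu : u ≠ 0) (hv : v ≠ 0)
    (h1 : (A.map (Complex.ofReal)).mulVec v = lam • u)
    (h2 : (A.map (Complex.ofReal)).transpose.mulVec u = lam • v) :
    ∃ i : Fin n, ‖lam‖ ≤ max (∑ k, |A i k|) (∑ k, |A k i|) :=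
  stmt_11_general A lam u v hu h1 h2
end

section
/- Let A be a real n×n matrix (n ≥ 2), let S be a nonempty proper subset of {1,…,n} with complement S̄, and let λ ∈ ℂ, u, v ∈ ℂⁿ nonzero with A·v = λ·u and Aᵀ·u = λ·v. For j ∈ {1,…,n} and a subset T ⊆ {1,…,n}, write r_j^T(A) = Σ_{k∈T} |a_{jk}| and c_j^T(A) = Σ_{k∈T} |a_{kj}|, and R_i(A) = r_i^{{1,…,n}}(A), C_i(A) = c_i^{{1,…,n}}(A). Then there exist indices i, j lying in different members of the partition {S, S̄} (i.e., i ∈ S, j ∈ S̄ or i ∈ S̄, j ∈ S) such that either (|λ| − r_j^{T̄}(A))·|λ| ≤ r_j^{T}(A)·max(R_i(A), C_i(A)) or (|λ| − c_j^{T̄}(A))·|λ| ≤ c_j^{T}(A)·max(R_i(A), C_i(A)), where T is the member of {S, S̄} containing i and T̄ its complement. -/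
/-!
Put `U = |u|`, `V = |v|` and `W = max U V` entrywise and `s = |λ|`; the triangle inequality turns
`A v = λ u` and `Aᵀ u = λ v` into `s U_j ≤ ∑_k |a_jk| V_k` and `s V_j ≤ ∑_k |a_kj| U_k`. Let `j`
maximise `W` (so `W_j > 0`), let `T` be the member of `{S, S̄}` not containing `j`, and let `i`
maximise `W` on `T`. At `i` the two inequalities give `s W_i ≤ max (R_i, C_i) W_j`. At `j`, the
inequality realising `W_j` splits over `T` and `T̄` as `s W_j ≤ r_j^T W_i + r_j^{T̄} W_j` (or the
same with column sums). Hence `(s - r_j^{T̄}) s W_j ≤ r_j^T s W_i ≤ r_j^T max (R_i, C_i) W_j`, and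
cancelling `W_j` gives the oval inequality.
-/

open Finset Matrix

variable {ι : Type*} [Fintype ι]

lemma norm_mul_norm_le_of_mulVec_eq_smul {A : Matrix ι ι ℝ} {lam : ℂ} {u v : ι → ℂ}
    (h : A.map Complex.ofReal *ᵥ v = lam • u) (j : ι) :
    ‖lam‖ * ‖u j‖ ≤ ∑ k, |A j k| * ‖v k‖ :=
  calc ‖lam‖ * ‖u j‖ = ‖∑ k, (A j k : ℂ) * v k‖ := by
        rw [← norm_mul, ← smul_eq_mul, ← Pi.smul_apply, ← h]; rfl
    _ ≤ ∑ k, ‖(A j k : ℂ) * v k‖ := norm_sum_le _ _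
    _ = ∑ k, |A j k| * ‖v k‖ := by simp only [norm_mul, Complex.norm_real, Real.norm_eq_abs]

lemma sum_mul_le_sum_mul_add_sum_compl_mul [DecidableEq ι] {f x : ι → ℝ} (hf : ∀ k, 0 ≤ f k)
    {T : Finset ι} {a g : ℝ} (hT : ∀ k ∈ T, x k ≤ a) (hTc : ∀ k ∉ T, x k ≤ g) :
    ∑ k, f k * x k ≤ (∑ k ∈ T, f k) * a + (∑ k ∈ Tᶜ, f k) * g := by
  rw [← sum_add_sum_compl T, sum_mul, sum_mul]
  exact add_le_add (sum_le_sum fun k hk => mul_le_mul_of_nonneg_left (hT k hk) (hf k))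
    (sum_le_sum fun k hk => mul_le_mul_of_nonneg_left (hTc k (mem_compl.mp hk)) (hf k))

lemma sub_mul_le_mul_of_le_mul_add_mul {s t c a g M : ℝ} (hs : 0 ≤ s) (ht : 0 ≤ t) (hg : 0 < g)
    (hj : s * g ≤ t * a + c * g) (hi : s * a ≤ M * g) :
    (s - c) * s ≤ t * M := by
  refine le_of_mul_le_mul_right ?_ hg
  calc (s - c) * s * g = s * ((s - c) * g) := by ring
    _ ≤ s * (t * a) := mul_le_mul_of_nonneg_left (by linarith) hs
    _ = t * (s * a) := by ring
    _ ≤ t * (M * g) := mul_le_mul_of_nonneg_left hi ht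
    _ = t * M * g := by ring

section Oval

variable {A : Matrix ι ι ℝ} {s : ℝ} {U V : ι → ℝ}

lemma mul_max_le_max_sum_abs_mul (hs : 0 ≤ s) {g : ℝ} (hg : 0 ≤ g)
    (hrow : ∀ j, s * U j ≤ ∑ k, |A j k| * V k) (hcol : ∀ j, s * V j ≤ ∑ k, |A k j| * U k)
    (hU : ∀ k, U k ≤ g) (hV : ∀ k, V k ≤ g) (i : ι) :
    s * max (U i) (V i) ≤ max (∑ k, |A i k|) (∑ k, |A k i|) * g := by
  rw [mul_max_of_nonneg _ _ hs, max_mul_of_nonneg _ _ hg, sum_mul, sum_mul]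
  exact max_le_max
    ((hrow i).trans (sum_le_sum fun k _ => mul_le_mul_of_nonneg_left (hV k) (abs_nonneg _)))
    ((hcol i).trans (sum_le_sum fun k _ => mul_le_mul_of_nonneg_left (hU k) (abs_nonneg _)))

theorem exists_mem_oval_at_max [DecidableEq ι] (hs : 0 ≤ s)
    (hrow : ∀ j, s * U j ≤ ∑ k, |A j k| * V k) (hcol : ∀ j, s * V j ≤ ∑ k, |A k j| * U k)
    {T : Finset ι} (hT : T.Nonempty) {p : ι}
    (hmax : ∀ k, max (U k) (V k) ≤ max (U p) (V p)) (hpos : 0 < max (U p) (V p)) :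
    ∃ i ∈ T,
      ((s - ∑ k ∈ Tᶜ, |A p k|) * s ≤ (∑ k ∈ T, |A p k|) * max (∑ k, |A i k|) (∑ k, |A k i|) ∨
        (s - ∑ k ∈ Tᶜ, |A k p|) * s ≤ (∑ k ∈ T, |A k p|) * max (∑ k, |A i k|) (∑ k, |A k i|)) := by
  obtain ⟨i, hiT, hi⟩ := T.exists_max_image (fun k => max (U k) (V k)) hT
  refine ⟨i, hiT, ?_⟩
  have hU : ∀ k, U k ≤ max (U p) (V p) := fun k => (le_max_left _ _).trans (hmax k)
  have hV : ∀ k, V k ≤ max (U p) (V p) := fun k => (le_max_right _ _).trans (hmax k)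
  have hUT : ∀ k ∈ T, U k ≤ max (U i) (V i) := fun k hk => (le_max_left _ _).trans (hi k hk)
  have hVT : ∀ k ∈ T, V k ≤ max (U i) (V i) := fun k hk => (le_max_right _ _).trans (hi k hk)
  have hsi := mul_max_le_max_sum_abs_mul hs hpos.le hrow hcol hU hV i
  rcases max_choice (U p) (V p) with hUp | hVp
  · refine .inl (sub_mul_le_mul_of_le_mul_add_mul hs
      (sum_nonneg fun k _ => abs_nonneg _) hpos ?_ hsi)
    calc s * max (U p) (V p) = s * U p := by rw [hUp]
      _ ≤ ∑ k, |A p k| * V k := hrow p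
      _ ≤ _ := sum_mul_le_sum_mul_add_sum_compl_mul (fun k => abs_nonneg _) hVT fun k _ => hV k
  · refine .inr (sub_mul_le_mul_of_le_mul_add_mul hs
      (sum_nonneg fun k _ => abs_nonneg _) hpos ?_ hsi)
    calc s * max (U p) (V p) = s * V p := by rw [hVp]
      _ ≤ ∑ k, |A k p| * U k := hcol p
      _ ≤ _ := sum_mul_le_sum_mul_add_sum_compl_mul (fun k => abs_nonneg _) hUT fun k _ => hU k

end Oval

theorem stmt_12_general {n : ℕ} (A : Matrix (Fin n) (Fin n) ℝ)
    (S : Finset (Fin n)) (hS1 : S.Nonempty) (hS2 : S ≠ Finset.univ)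
    (lam : ℂ) (u v : Fin n → ℂ) (hu : u ≠ 0)
    (h1 : (A.map (Complex.ofReal)).mulVec v = lam • u)
    (h2 : (A.map (Complex.ofReal)).transpose.mulVec u = lam • v) :
    ∃ i j : Fin n, ((i ∈ S ∧ j ∉ S) ∨ (i ∉ S ∧ j ∈ S)) ∧
      ((‖lam‖ - ∑ k ∈ (if i ∈ S then S else Sᶜ)ᶜ, |A j k|) * ‖lam‖ ≤
          (∑ k ∈ (if i ∈ S then S else Sᶜ), |A j k|) *
            max (∑ k, |A i k|) (∑ k, |A k i|) ∨
        (‖lam‖ - ∑ k ∈ (if i ∈ S then S else Sᶜ)ᶜ, |A k j|) * ‖lam‖ ≤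
          (∑ k ∈ (if i ∈ S then S else Sᶜ), |A k j|) *
            max (∑ k, |A i k|) (∑ k, |A k i|)) := by
  have hrow := norm_mul_norm_le_of_mulVec_eq_smul h1
  have hcol := norm_mul_norm_le_of_mulVec_eq_smul (A := Aᵀ) (by rwa [transpose_map])
  obtain ⟨k₀, hk₀⟩ := Function.ne_iff.mp hu
  obtain ⟨p, -, hp⟩ := univ.exists_max_image (fun k => max ‖u k‖ ‖v k‖) ⟨k₀, mem_univ _⟩
  have hmax : ∀ k, max ‖u k‖ ‖v k‖ ≤ max ‖u p‖ ‖v p‖ := fun k => hp k (mem_univ k)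
  have hpos : 0 < max ‖u p‖ ‖v p‖ :=
    (norm_pos_iff.mpr hk₀).trans_le ((le_max_left _ _).trans (hmax k₀))
  by_cases hpS : p ∈ S
  · have hSc : Sᶜ.Nonempty := (compl_ne_univ_iff_nonempty Sᶜ).mp (by rwa [compl_compl])
    obtain ⟨i, hi, hoval⟩ := exists_mem_oval_at_max (norm_nonneg lam) hrow hcol hSc hmax hpos
    have hiS : i ∉ S := mem_compl.mp hi
    refine ⟨i, p, .inr ⟨hiS, hpS⟩, ?_⟩
    simpa only [if_neg hiS, compl_compl] using hoval
  · obtain ⟨i, hi, hoval⟩ :=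
      exists_mem_oval_at_max (norm_nonneg lam) hrow hcol hS1 hmax hpos
    exact ⟨i, p, .inl ⟨hi, hpS⟩, by simpa only [if_pos hi] using hoval⟩

theorem stmt_12 {n : ℕ} (hn : 2 ≤ n) (A : Matrix (Fin n) (Fin n) ℝ)
    (S : Finset (Fin n)) (hS1 : S.Nonempty) (hS2 : S ≠ Finset.univ)
    (lam : ℂ) (u v : Fin n → ℂ) (hu : u ≠ 0) (hv : v ≠ 0)
    (h1 : (A.map (Complex.ofReal)).mulVec v = lam • u)
    (h2 : (A.map (Complex.ofReal)).transpose.mulVec u = lam • v) :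
    ∃ i j : Fin n, ((i ∈ S ∧ j ∉ S) ∨ (i ∉ S ∧ j ∈ S)) ∧
      ((‖lam‖ - ∑ k ∈ (if i ∈ S then S else Sᶜ)ᶜ, |A j k|) * ‖lam‖ ≤
          (∑ k ∈ (if i ∈ S then S else Sᶜ), |A j k|) *
            max (∑ k, |A i k|) (∑ k, |A k i|) ∨
        (‖lam‖ - ∑ k ∈ (if i ∈ S then S else Sᶜ)ᶜ, |A k j|) * ‖lam‖ ≤
          (∑ k ∈ (if i ∈ S then S else Sᶜ), |A k j|) *
            max (∑ k, |A i k|) (∑ k, |A k i|)) :=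
  stmt_12_general A S hS1 hS2 lam u v hu h1 h2
end
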